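/- Define u(R,T) = T^{−2}[−4T³/3 + 2∑_{n∈ℤ} max(0,T−|n|)² + ∑_{n∈ℤ} max(0,T−|T+2R−n|)²]. On the region {(R,T) : 1/2 ≤ T ≤ 1, R ≥ 0, T+R ≥ 1, R ≤ 1/2}, the minimum of u is 7/6, attained uniquely at (R,T) = (1/4, 1). -/
import Mathlib

noncomputable def u (R T : ℝ) : ℝ :=
  (-(4 * T ^ 3) / 3 + 2 * ∑' n : ℤ, (max 0 (T - |(n : ℝ)|)) ^ 2
    + ∑' n : ℤ, (max 0 (T - |T + 2 * R - (n : ℝ)|)) ^ 2) / T ^ 2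

lemma sum1 (T : ℝ) (h1 : 0 ≤ T) (h2 : T ≤ 1) :
    ∑' n : ℤ, (max 0 (T - |(n : ℝ)|)) ^ 2 = T ^ 2 := by
  rw [tsum_eq_single 0]
  · simp [max_eq_right h1]
  · intro n hn
    have h3 : (1 : ℤ) ≤ |n| := Int.one_le_abs hn
    have h4 : (1 : ℝ) ≤ |(n : ℝ)| := by
      rw [← Int.cast_abs]; exact_mod_cast h3
    have : max 0 (T - |(n : ℝ)|) = 0 := max_eq_left (by linarith)
    rw [this]; ring

lemma sum2 (R T : ℝ) (hT : 1 / 2 ≤ T) (hT1 : T ≤ 1) (hR : 0 ≤ R)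
    (hTR : 1 ≤ T + R) (hR2 : R ≤ 1 / 2) :
    ∑' n : ℤ, (max 0 (T - |T + 2 * R - (n : ℝ)|)) ^ 2
      = (1 - 2 * R) ^ 2 + (2 * T + 2 * R - 2) ^ 2 := by
  have hx1 : 1 ≤ T + 2 * R := by linarith
  have hx2 : T + 2 * R ≤ 2 := by linarith
  rw [tsum_eq_sum (s := ({1, 2} : Finset ℤ)) ?_]
  · rw [Finset.sum_pair (by decide : (1 : ℤ) ≠ 2)]
    have e1 : |T + 2 * R - ((1 : ℤ) : ℝ)| = T + 2 * R - 1 := by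
      rw [abs_of_nonneg]; · push_cast; ring
      · push_cast; linarith
    have e2 : |T + 2 * R - ((2 : ℤ) : ℝ)| = 2 - (T + 2 * R) := by
      rw [abs_of_nonpos]; · push_cast; ring
      · push_cast; linarith
    rw [e1, e2, max_eq_right (by linarith), max_eq_right (by linarith)]
    ring
  · intro n hn
    have hn' : n ≤ 0 ∨ 3 ≤ n := by
      simp only [Finset.mem_insert, Finset.mem_singleton] at hn; omega
    have : T ≤ |T + 2 * R - (n : ℝ)| := by
      rcases hn' with h | h
      · have : (n : ℝ) ≤ 0 := by exact_mod_cast h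
        rw [abs_of_nonneg (by linarith)]; linarith
      · have : (3 : ℝ) ≤ (n : ℝ) := by exact_mod_cast h
        rw [abs_of_nonpos (by linarith)]; linarith
    have : max 0 (T - |T + 2 * R - (n : ℝ)|) = 0 := max_eq_left (by linarith)
    rw [this]; ring

lemma u_eq (R T : ℝ) (hT : 1 / 2 ≤ T) (hT1 : T ≤ 1) (hR : 0 ≤ R)
    (hTR : 1 ≤ T + R) (hR2 : R ≤ 1 / 2) :
    u R T = (-(4 * T ^ 3) / 3 + 2 * T ^ 2
      + ((1 - 2 * R) ^ 2 + (2 * T + 2 * R - 2) ^ 2)) / T ^ 2 := by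
  rw [u, sum1 T (by linarith) hT1, sum2 R T hT hT1 hR hTR hR2]

theorem u_min_on_D3 :
    (∀ R T : ℝ, 1 / 2 ≤ T → T ≤ 1 → 0 ≤ R → 1 ≤ T + R → R ≤ 1 / 2 →
      7 / 6 ≤ u R T) ∧
    u (1 / 4) 1 = 7 / 6 ∧
    (∀ R T : ℝ, 1 / 2 ≤ T → T ≤ 1 → 0 ≤ R → 1 ≤ T + R → R ≤ 1 / 2 →
      u R T = 7 / 6 → R = 1 / 4 ∧ T = 1) := by
  refine ⟨?_, ?_, ?_⟩
  · intro R T h1 h2 h3 h4 h5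
    rw [u_eq R T h1 h2 h3 h4 h5]
    have hT2 : (0 : ℝ) < T ^ 2 := by positivity
    rw [le_div_iff₀ hT2]
    nlinarith [sq_nonneg (3 - 2 * T - 4 * R), sq_nonneg (16 * T - 9),
      mul_nonneg (by linarith : (0:ℝ) ≤ 1 - T) (sq_nonneg (16 * T - 9))]
  · rw [u_eq (1/4) 1 (by norm_num) le_rfl (by norm_num) (by norm_num) (by norm_num)]
    norm_num
  · intro R T h1 h2 h3 h4 h5 heq
    rw [u_eq R T h1 h2 h3 h4 h5] at heq
    have hT2 : (0 : ℝ) < T ^ 2 := by positivity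
    rw [div_eq_iff (ne_of_gt hT2)] at heq
    have hT : T = 1 := by
      have h6 : 1 ≤ T := by
        by_contra h
        push_neg at h
        nlinarith [sq_nonneg (3 - 2 * T - 4 * R),
          mul_nonneg (by linarith : (0:ℝ) ≤ 1 - T) (sq_nonneg (16 * T - 9))]
      linarith
    subst hT
    have h9 : (4 * R - 1) ^ 2 = 0 := by nlinarith
    have := sq_eq_zero_iff.mp h9
    exact ⟨by linarith, rfl⟩
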